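/- Let k ≥ 4 and r₂, r₃, …, r_k ≥ 1, and let H be the join of a single vertex with the disjoint union of the complete graphs K_{r₂}, K_{r₃}, …, K_{r_k}. Then the eccentricity matrix ε(H) has exactly one positive eigenvalue. -/

import Mathlib

open Finset Polynomial

noncomputable def ecc {V : Type*} [Fintype V] (G : SimpleGraph V) (u : V) : ℕ :=
  Finset.univ.sup (G.dist u)

noncomputable def eccMatrix {V : Type*} [Fintype V] (G : SimpleGraph V) :
    Matrix V V ℝ := fun u v =>
  if G.dist u v = min (ecc G u) (ecc G v) then (G.dist u v : ℝ) else 0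

theorem eccMatrix_isHermitian {V : Type*} [Fintype V] (G : SimpleGraph V) :
    (eccMatrix G).IsHermitian := by
  unfold Matrix.IsHermitian
  ext u v
  simp only [Matrix.conjTranspose_apply, eccMatrix, star_trivial]
  rw [SimpleGraph.dist_comm, min_comm]

/-- Number of positive eigenvalues (with multiplicity) of a real symmetric matrix. -/
noncomputable def posEigCount {V : Type*} [Fintype V] [DecidableEq V]
    {A : Matrix V V ℝ} (hA : A.IsHermitian) : ℕ :=
  (Finset.univ.filter fun i => 0 < hA.eigenvalues i).card

/-- The join of two simple graphs: disjoint union plus all edges in between. -/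
def graphJoin {α β : Type*} (G : SimpleGraph α) (H : SimpleGraph β) :
    SimpleGraph (α ⊕ β) where
  Adj x y := match x, y with
    | Sum.inl a, Sum.inl b => G.Adj a b
    | Sum.inr a, Sum.inr b => H.Adj a b
    | _, _ => True
  symm := ⟨by rintro (a|a) (b|b) h <;> first | exact G.adj_symm h | exact H.adj_symm h | trivial⟩
  loopless := ⟨by rintro (a|a) h <;> first | exact G.irrefl h | exact H.irrefl h⟩

/-- The disjoint union of two simple graphs. -/
def graphSum {α β : Type*} (G : SimpleGraph α) (H : SimpleGraph β) :
    SimpleGraph (α ⊕ β) where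
  Adj x y := match x, y with
    | Sum.inl a, Sum.inl b => G.Adj a b
    | Sum.inr a, Sum.inr b => H.Adj a b
    | _, _ => False
  symm := ⟨by rintro (a|a) (b|b) h <;> first | exact G.adj_symm h | exact H.adj_symm h | trivial⟩
  loopless := ⟨by rintro (a|a) h <;> first | exact G.irrefl h | exact H.irrefl h⟩

/-- Disjoint union of blocks indexed by `ι`; block `i` has `r i` vertices and is a
clique when `P i` holds and a coclique (independent set) otherwise. -/
def blocksGraph {ι : Type*} (r : ι → ℕ) (P : ι → Prop) :
    SimpleGraph (Σ i, Fin (r i)) where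
  Adj x y := x ≠ y ∧ x.1 = y.1 ∧ P x.1
  symm := ⟨by rintro x y ⟨h1, h2, h3⟩; exact ⟨h1.symm, h2.symm, h2 ▸ h3⟩⟩
  loopless := ⟨fun x h => h.1 rfl⟩

/-! The centre is adjacent to every leaf, and two leaves are at distance 1 or 2 according as
they lie in the same clique or not. With at least two cliques the centre therefore has
eccentricity 1 and every leaf eccentricity 2, so `ε(H)` has entry 1 between the centre and a
leaf, 2 between leaves of different cliques, and 0 otherwise:
`ε(H) = g 𝟙ᵀ + 𝟙 gᵀ - 2 ∑ᵢ eᵢ eᵢᵀ`, where `g` is the indicator of the leaves and `eᵢ` that of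
the `i`-th clique. The quadratic form of `ε(H)` is thus nonpositive on the hyperplane `g ⊥ x`,
which leaves room for at most one positive eigenvalue, and it is positive on the vector
supported on the centre and one leaf. -/

open Matrix

lemma ecc_le_iff {V : Type*} [Fintype V] {G : SimpleGraph V} {u : V} {m : ℕ} :
    ecc G u ≤ m ↔ ∀ v, G.dist u v ≤ m := by
  simp [ecc]

lemma dist_le_ecc {V : Type*} [Fintype V] (G : SimpleGraph V) (u v : V) : G.dist u v ≤ ecc G u :=
  Finset.le_sup (Finset.mem_univ v)

lemma eccMatrix_apply_self {V : Type*} [Fintype V] (G : SimpleGraph V) (u : V) :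
    eccMatrix G u u = 0 := by
  simp [eccMatrix]

namespace graphJoin
open SimpleGraph
variable {α β : Type*} (G : SimpleGraph α) (H : SimpleGraph β)

lemma adj_inl_inr (a : α) (b : β) : (graphJoin G H).Adj (.inl a) (.inr b) := trivial

lemma adj_inr_inr {a b : β} : (graphJoin G H).Adj (.inr a) (.inr b) ↔ H.Adj a b := Iff.rfl

lemma dist_inl_inr (a : α) (b : β) : (graphJoin G H).dist (.inl a) (.inr b) = 1 :=
  dist_eq_one_iff_adj.mpr (adj_inl_inr G H a b)

lemma dist_inr_inl (a : α) (b : β) : (graphJoin G H).dist (.inr b) (.inl a) = 1 := by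
  rw [dist_comm, dist_inl_inr]

lemma dist_inr_inr_le_two (c : α) (a b : β) : (graphJoin G H).dist (.inr a) (.inr b) ≤ 2 :=
  dist_le ((Walk.nil.cons (adj_inl_inr G H c b)).cons (adj_inl_inr G H c a).symm)

lemma dist_inr_inr_of_not_adj (c : α) {a b : β} (hne : a ≠ b) (hnadj : ¬H.Adj a b) :
    (graphJoin G H).dist (.inr a) (.inr b) = 2 := by
  have hreach : (graphJoin G H).Reachable (.inr a) (.inr b) :=
    (adj_inl_inr G H c a).symm.reachable.trans (adj_inl_inr G H c b).reachable
  have hpos := hreach.pos_dist_of_ne (Sum.inr_injective.ne hne)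
  have hne1 : (graphJoin G H).dist (.inr a) (.inr b) ≠ 1 := by
    rwa [Ne, dist_eq_one_iff_adj, adj_inr_inr]
  have := dist_inr_inr_le_two G H c a b
  omega

end graphJoin

namespace Matrix.IsHermitian
variable {n : Type*} [Fintype n] [DecidableEq n] {A : Matrix n n ℝ} (hA : A.IsHermitian)
include hA

lemma posSemidef_neg_of_eigenvalues_nonpos (h : ∀ i, hA.eigenvalues i ≤ 0) :
    (-A).PosSemidef := by
  rw [hA.spectral_theorem, ← map_neg, diagonal_neg, Unitary.conjStarAlgAut_apply,
    IsUnit.posSemidef_star_right_conjugate_iff Unitary.isUnit_coe, posSemidef_diagonal_iff]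
  exact fun i => neg_nonneg.mpr (h i)

lemma one_le_posEigCount (x : n → ℝ) (hx : 0 < x ⬝ᵥ A *ᵥ x) : 1 ≤ posEigCount hA := by
  by_contra! h
  have hnonpos : ∀ i, hA.eigenvalues i ≤ 0 := by
    simpa [posEigCount] using h
  have := (hA.posSemidef_neg_of_eigenvalues_nonpos hnonpos).dotProduct_mulVec_nonneg x
  simp only [star_trivial, neg_mulVec, dotProduct_neg, neg_nonneg] at this
  linarith

lemma dotProduct_eigenvectorBasis (i j : n) :
    ⇑(hA.eigenvectorBasis i) ⬝ᵥ ⇑(hA.eigenvectorBasis j) = if i = j then 1 else 0 := by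
  have := (orthonormal_iff_ite.mp hA.eigenvectorBasis.orthonormal) j i
  rw [EuclideanSpace.inner_eq_star_dotProduct] at this
  simpa [eq_comm] using this

lemma dotProduct_mulVec_add_eigenvectorBasis {i j : n} (hij : i ≠ j) (c d : ℝ) :
    (c • ⇑(hA.eigenvectorBasis i) + d • ⇑(hA.eigenvectorBasis j)) ⬝ᵥ
        A *ᵥ (c • ⇑(hA.eigenvectorBasis i) + d • ⇑(hA.eigenvectorBasis j)) =
      c ^ 2 * hA.eigenvalues i + d ^ 2 * hA.eigenvalues j := by
  simp only [mulVec_add, mulVec_smul, mulVec_eigenvectorBasis, add_dotProduct,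
    dotProduct_add, smul_dotProduct, dotProduct_smul, dotProduct_eigenvectorBasis, if_true,
    if_neg hij, if_neg hij.symm, smul_eq_mul]
  ring

/-- Two eigenvectors with positive eigenvalues span a plane on which the quadratic form is
positive definite, and every plane meets the hyperplane `w ⬝ᵥ x = 0`. -/
lemma posEigCount_le_one (w : n → ℝ) (hw : ∀ x, w ⬝ᵥ x = 0 → x ⬝ᵥ A *ᵥ x ≤ 0) :
    posEigCount hA ≤ 1 := by
  rw [posEigCount, Finset.card_le_one]
  intro i hi j hj
  by_contra hij
  simp only [Finset.mem_filter, Finset.mem_univ, true_and] at hi hj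
  set a := w ⬝ᵥ ⇑(hA.eigenvectorBasis i)
  set b := w ⬝ᵥ ⇑(hA.eigenvectorBasis j)
  obtain ⟨c, d, hcd, hne⟩ : ∃ c d : ℝ, c * a + d * b = 0 ∧ (c ≠ 0 ∨ d ≠ 0) := by
    by_cases ha : a = 0
    · exact ⟨1, 0, by simp [ha], Or.inl one_ne_zero⟩
    · exact ⟨b, -a, by ring, Or.inr (neg_ne_zero.mpr ha)⟩
  have hwx := hw (c • ⇑(hA.eigenvectorBasis i) + d • ⇑(hA.eigenvectorBasis j))
    (by simpa [dotProduct_add, dotProduct_smul] using hcd)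
  rw [hA.dotProduct_mulVec_add_eigenvectorBasis hij] at hwx
  rcases hne with hc | hd
  · linarith [mul_pos (sq_pos_of_ne_zero hc) hi, mul_nonneg (sq_nonneg d) hj.le]
  · linarith [mul_pos (sq_pos_of_ne_zero hd) hj, mul_nonneg (sq_nonneg c) hi.le]

end Matrix.IsHermitian

lemma Matrix.single_add_single_dotProduct_mulVec {n : Type*} [Fintype n] [DecidableEq n]
    (A : Matrix n n ℝ) (i j : n) :
    (Pi.single i 1 + Pi.single j 1) ⬝ᵥ A *ᵥ (Pi.single i 1 + Pi.single j 1) =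
      A i i + A i j + A j i + A j j := by
  simp only [mulVec_add, dotProduct_add, add_dotProduct, mulVec_single_one,
    single_one_dotProduct, col_apply]
  ring

lemma Matrix.dotProduct_vecMulVec_mulVec {n : Type*} [Fintype n] (u v x : n → ℝ) :
    x ⬝ᵥ vecMulVec u v *ᵥ x = (x ⬝ᵥ u) * (v ⬝ᵥ x) := by
  rw [vecMulVec_mulVec, op_smul_eq_smul, dotProduct_smul, smul_eq_mul, mul_comm]

lemma one_le_posEigCount_eccMatrix {V : Type*} [Fintype V] [DecidableEq V] (G : SimpleGraph V)
    {u v : V} (h : 0 < eccMatrix G u v) : 1 ≤ posEigCount (eccMatrix_isHermitian G) := by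
  refine (eccMatrix_isHermitian G).one_le_posEigCount (Pi.single u 1 + Pi.single v 1) ?_
  rw [single_add_single_dotProduct_mulVec, eccMatrix_apply_self, eccMatrix_apply_self,
    ← (eccMatrix_isHermitian G).apply v u, star_trivial]
  linarith

namespace graphJoin
open SimpleGraph
variable {β : Type*} [Fintype β] (H : SimpleGraph β)

lemma ecc_top_unit_inl (u : Unit) (b : β) :
    ecc (graphJoin (⊤ : SimpleGraph Unit) H) (.inl u) = 1 := by
  refine le_antisymm (ecc_le_iff.mpr ?_) ?_
  · rintro (v | b')
    · simp [Subsingleton.elim u v]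
    · exact (dist_inl_inr _ H u b').le
  · exact (dist_inl_inr _ H u b).symm.le.trans (dist_le_ecc _ _ _)

lemma ecc_top_unit_inr {a : β} (h : ∃ b, b ≠ a ∧ ¬H.Adj a b) :
    ecc (graphJoin (⊤ : SimpleGraph Unit) H) (.inr a) = 2 := by
  obtain ⟨b, hba, hnadj⟩ := h
  refine le_antisymm (ecc_le_iff.mpr ?_) ?_
  · rintro (u | b')
    · simp [dist_inr_inl]
    · exact dist_inr_inr_le_two _ H () a b'
  · exact (dist_inr_inr_of_not_adj _ H () hba.symm hnadj).symm.le.trans (dist_le_ecc _ _ _)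

lemma eccMatrix_top_unit_inl_inr (u : Unit) (b : β) :
    eccMatrix (graphJoin (⊤ : SimpleGraph Unit) H) (.inl u) (.inr b) = 1 := by
  have hb : 1 ≤ ecc (graphJoin (⊤ : SimpleGraph Unit) H) (.inr b) :=
    (dist_inr_inl _ H u b).symm.le.trans (dist_le_ecc _ _ _)
  simp [eccMatrix, dist_inl_inr, ecc_top_unit_inl H u b, hb]

lemma eccMatrix_top_unit_inr_inl (u : Unit) (b : β) :
    eccMatrix (graphJoin (⊤ : SimpleGraph Unit) H) (.inr b) (.inl u) = 1 := by
  rw [← (eccMatrix_isHermitian _).apply, eccMatrix_top_unit_inl_inr, star_one]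

lemma eccMatrix_top_unit_inr_inr_of_adj (hH : ∀ a, ∃ b, b ≠ a ∧ ¬H.Adj a b) {a b : β}
    (hadj : H.Adj a b) : eccMatrix (graphJoin (⊤ : SimpleGraph Unit) H) (.inr a) (.inr b) = 0 := by
  simp [eccMatrix, ecc_top_unit_inr H (hH a), ecc_top_unit_inr H (hH b),
    dist_eq_one_iff_adj.mpr ((adj_inr_inr _ H).mpr hadj)]

lemma eccMatrix_top_unit_inr_inr_of_not_adj (hH : ∀ a, ∃ b, b ≠ a ∧ ¬H.Adj a b) {a b : β}
    (hne : a ≠ b) (hnadj : ¬H.Adj a b) :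
    eccMatrix (graphJoin (⊤ : SimpleGraph Unit) H) (.inr a) (.inr b) = 2 := by
  simp [eccMatrix, ecc_top_unit_inr H (hH a), ecc_top_unit_inr H (hH b),
    dist_inr_inr_of_not_adj _ H () hne hnadj]

end graphJoin

namespace blocksGraph
variable {ι : Type*} (r : ι → ℕ)

lemma adj_true_iff {a b : Σ i, Fin (r i)} :
    (blocksGraph r fun _ => True).Adj a b ↔ a ≠ b ∧ a.1 = b.1 := by
  simp [blocksGraph]

lemma exists_ne_not_adj [Nontrivial ι] (hr : ∀ i, 1 ≤ r i) (a : Σ i, Fin (r i)) :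
    ∃ b, b ≠ a ∧ ¬(blocksGraph r fun _ => True).Adj a b := by
  obtain ⟨j, hj⟩ := exists_ne a.1
  exact ⟨⟨j, ⟨0, hr j⟩⟩, fun h => hj (congrArg Sigma.fst h),
    fun h => hj ((adj_true_iff r).mp h).2.symm⟩

variable [Fintype ι] [DecidableEq ι]

def leafIndicator : Unit ⊕ (Σ i, Fin (r i)) → ℝ := Sum.elim 0 1

def blockIndicator (i : ι) : Unit ⊕ (Σ i, Fin (r i)) → ℝ :=
  Sum.elim 0 fun a => if a.1 = i then 1 else 0

lemma eccMatrix_top_unit_eq [Nontrivial ι] (hr : ∀ i, 1 ≤ r i) :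
    eccMatrix (graphJoin (⊤ : SimpleGraph Unit) (blocksGraph r fun _ => True)) =
      vecMulVec (leafIndicator r) 1 + vecMulVec 1 (leafIndicator r) -
        (2 : ℝ) • ∑ i, vecMulVec (blockIndicator r i) (blockIndicator r i) := by
  have hH := exists_ne_not_adj r hr
  ext u v
  simp only [Matrix.sub_apply, Matrix.add_apply, Matrix.smul_apply, Matrix.sum_apply,
    vecMulVec_apply, Pi.one_apply]
  rcases u with u | a <;> rcases v with v | b
  · simp [eccMatrix_apply_self, leafIndicator, blockIndicator]
  · simp [graphJoin.eccMatrix_top_unit_inl_inr, leafIndicator, blockIndicator]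
  · simp [graphJoin.eccMatrix_top_unit_inr_inl, leafIndicator, blockIndicator]
  · by_cases hab : a.1 = b.1
    · have hentry : eccMatrix (graphJoin (⊤ : SimpleGraph Unit) (blocksGraph r fun _ => True))
        (.inr a) (.inr b) = 0 := by
        by_cases he : a = b
        · rw [he, eccMatrix_apply_self]
        · exact graphJoin.eccMatrix_top_unit_inr_inr_of_adj _ hH ((adj_true_iff r).mpr ⟨he, hab⟩)
      norm_num [hentry, leafIndicator, blockIndicator, hab]
    · have hentry : eccMatrix (graphJoin (⊤ : SimpleGraph Unit) (blocksGraph r fun _ => True))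
        (.inr a) (.inr b) = 2 :=
        graphJoin.eccMatrix_top_unit_inr_inr_of_not_adj _ hH (fun h => hab (congrArg Sigma.fst h))
          (fun h => hab ((adj_true_iff r).mp h).2)
      norm_num [hentry, leafIndicator, blockIndicator, hab]

lemma dotProduct_eccMatrix_top_unit_mulVec_nonpos [Nontrivial ι] (hr : ∀ i, 1 ≤ r i)
    (x : Unit ⊕ (Σ i, Fin (r i)) → ℝ) (hx : leafIndicator r ⬝ᵥ x = 0) :
    x ⬝ᵥ eccMatrix (graphJoin (⊤ : SimpleGraph Unit) (blocksGraph r fun _ => True)) *ᵥ x ≤ 0 := by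
  rw [eccMatrix_top_unit_eq r hr, sub_mulVec, add_mulVec, smul_mulVec, sum_mulVec,
    dotProduct_sub, dotProduct_add, dotProduct_smul, dotProduct_sum]
  simp only [dotProduct_vecMulVec_mulVec, hx, dotProduct_comm x (leafIndicator r), mul_zero,
    zero_mul, zero_add, smul_eq_mul, dotProduct_comm (blockIndicator r _) x, ← sq]
  have := Finset.sum_nonneg fun i (_ : i ∈ Finset.univ) => sq_nonneg (x ⬝ᵥ blockIndicator r i)
  linarith

end blocksGraph

/-- for `k ≥ 4`, the join of a single vertex with the disjoint union of
cliques of sizes `r 0, …, r (k-2)` (a mixed extension of `S_k` of type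
`(1, r₂, …, r_k)`) has exactly one positive eccentricity eigenvalue. -/
theorem stmt14 (k : ℕ) (hk : 4 ≤ k) (r : Fin (k - 1) → ℕ) (hr : ∀ i, 1 ≤ r i) :
    posEigCount (eccMatrix_isHermitian (graphJoin (⊤ : SimpleGraph Unit)
      (blocksGraph r (fun _ => True)))) = 1 := by
  have : Nontrivial (Fin (k - 1)) := Fin.nontrivial_iff_two_le.mpr (by omega)
  refine le_antisymm ?_ ?_
  · exact (eccMatrix_isHermitian _).posEigCount_le_one (blocksGraph.leafIndicator r)
      (blocksGraph.dotProduct_eccMatrix_top_unit_mulVec_nonpos r hr)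
  · let b : Σ i, Fin (r i) := ⟨⟨0, by omega⟩, ⟨0, hr _⟩⟩
    refine one_le_posEigCount_eccMatrix _ (u := .inl ()) (v := .inr b) ?_
    rw [graphJoin.eccMatrix_top_unit_inl_inr]
    exact one_pos
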